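/- arXiv:2010.16383 — 4 statements merged into one kernel-verified Lean document; each statement's English description precedes it below -/
import Mathlib

section
/- For real x, z outside [-a,a] with x ≠ z (where a > 0), (1/π)·∫_{-a}^{a} ds/(√(a² - s²)(s - x)(s - z)) = (1/(x - z))·(1/√(z² - a²) - 1/√(x² - a²)), where √(t² - a²) carries the sign of t. -/
open Real

open Filter Set MeasureTheory intervalIntegral Topology in
private lemma sqrt_int_aux (a : ℝ) (ha : 0 < a) :
    IntervalIntegrable (fun s => 1 / Real.sqrt (a^2 - s^2)) volume (-a) a := by
  apply intervalIntegrable_deriv_of_nonneg (g := fun s => Real.arcsin (s / a))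
  · exact (Real.continuous_arcsin.comp (continuous_id.div_const a)).continuousOn
  · intro s hs
    rw [min_eq_left (by linarith), max_eq_right (by linarith)] at hs
    have h1 : s / a ≠ -1 := by
      intro h
      have : s = -a := by field_simp at h; linarith
      rw [this] at hs; exact absurd hs.1 (lt_irrefl _)
    have h2 : s / a ≠ 1 := by
      intro h
      have : s = a := by field_simp at h; linarith
      rw [this] at hs; exact absurd hs.2 (lt_irrefl _)
    have := (Real.hasDerivAt_arcsin h1 h2).comp s ((hasDerivAt_id s).div_const a)
    refine this.congr_deriv ?_
    symm
    have hs2 : s^2 < a^2 := sq_lt_sq' hs.1 hs.2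
    rw [show (1 : ℝ) - (s/a)^2 = (a^2 - s^2)/(a^2) by field_simp]
    rw [Real.sqrt_div (by nlinarith : (0:ℝ) ≤ a^2 - s^2), Real.sqrt_sq ha.le]
    have ht : Real.sqrt (a^2 - s^2) ≠ 0 := ne_of_gt (Real.sqrt_pos.2 (by nlinarith))
    field_simp
  · intro s hs
    positivity

open Filter Set MeasureTheory intervalIntegral Topology in
private lemma lim_aux {R c : ℝ} (hR : 0 < R) (hc : c ≠ 0) {l : Filter ℝ} {n q : ℝ → ℝ}
    (hn : Tendsto n l (𝓝 c)) (hq : Tendsto q l (𝓝[>] 0)) :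
    Tendsto (fun s => R⁻¹ * Real.arctan (n s / (R * q s))) l
      (𝓝 (R⁻¹ * (Real.sign c * (π / 2)))) := by
  have hqi : Tendsto (fun s => (q s)⁻¹) l atTop := hq.inv_tendsto_nhdsGT_zero
  have hnr : Tendsto (fun s => n s / R) l (𝓝 (c / R)) := hn.div_const R
  have heq : ∀ s, n s / (R * q s) = (n s / R) * (q s)⁻¹ := by
    intro s; rw [div_mul_eq_div_div, div_eq_mul_inv]
  rcases hc.lt_or_gt with h | h
  · have hb : Tendsto (fun s => (n s / R) * (q s)⁻¹) l atBot :=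
      Filter.Tendsto.neg_mul_atTop (div_neg_of_neg_of_pos h hR) hnr hqi
    have := ((Real.tendsto_arctan_atBot.mono_right nhdsWithin_le_nhds).comp hb).const_mul R⁻¹
    rw [Real.sign_of_neg h]
    simpa [Function.comp_def, heq] using this
  · have hb : Tendsto (fun s => (n s / R) * (q s)⁻¹) l atTop :=
      Filter.Tendsto.pos_mul_atTop (div_pos h hR) hnr hqi
    have := ((Real.tendsto_arctan_atTop.mono_right nhdsWithin_le_nhds).comp hb).const_mul R⁻¹
    rw [Real.sign_of_pos h]
    simpa [Function.comp_def, heq] using this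

/-- signed square root: carries the sign of `t` on `√(t² - a²)` -/
noncomputable def signedRoot (a t : ℝ) : ℝ := Real.sign t * Real.sqrt (t^2 - a^2)

open Filter Set MeasureTheory intervalIntegral Topology in
private lemma key_single (a x : ℝ) (ha : 0 < a) (hx : a < |x|) :
    ∫ s in (-a)..a, 1 / (Real.sqrt (a^2 - s^2) * (s - x)) = -π / signedRoot a x := by
  have hx2 : a^2 < x^2 := by nlinarith [sq_abs x, abs_nonneg x]
  have hRpos : 0 < Real.sqrt (x^2 - a^2) := Real.sqrt_pos.2 (by linarith)
  set R := Real.sqrt (x^2 - a^2) with hRdef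
  have hR2 : R^2 = x^2 - a^2 := Real.sq_sqrt (by linarith)
  have hsx : ∀ s ∈ Set.Icc (-a) a, s - x ≠ 0 := by
    intro s hs
    rcases lt_abs.mp hx with h | h
    · have := hs.2; intro h0; nlinarith
    · have := hs.1; intro h0; nlinarith
  have hderiv : ∀ s ∈ Ioo (-a) a,
      HasDerivAt (fun t => R⁻¹ * Real.arctan ((a^2 - x*t) / (R * Real.sqrt (a^2 - t^2))))
        (1 / (Real.sqrt (a^2 - s^2) * (s - x))) s := by
    intro s hs
    have hs2 : s^2 < a^2 := sq_lt_sq' hs.1 hs.2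
    have hQpos : 0 < Real.sqrt (a^2 - s^2) := Real.sqrt_pos.2 (by linarith)
    set Q := Real.sqrt (a^2 - s^2) with hQdef
    have hQ2 : Q^2 = a^2 - s^2 := Real.sq_sqrt (by linarith)
    have hsx' : s - x ≠ 0 := hsx s ⟨hs.1.le, hs.2.le⟩
    have h1 : HasDerivAt (fun t : ℝ => a^2 - t^2) (-(2*s)) s := by
      simpa using ((hasDerivAt_pow 2 s).const_sub (a^2))
    have h2 : HasDerivAt (fun t => Real.sqrt (a^2 - t^2)) (1/(2*Q) * (-(2*s))) s :=
      (Real.hasDerivAt_sqrt (by nlinarith)).comp s h1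
    have h3 : HasDerivAt (fun t => R * Real.sqrt (a^2 - t^2)) (R * (1/(2*Q) * (-(2*s)))) s :=
      h2.const_mul R
    have h4 : HasDerivAt (fun t : ℝ => a^2 - x*t) (-x) s := by
      simpa using ((hasDerivAt_id s).const_mul x).const_sub (a^2)
    have h5 := h4.div h3 (ne_of_gt (mul_pos hRpos hQpos))
    have h6 := ((Real.hasDerivAt_arctan ((a^2 - x*s) / (R * Q))).comp s h5).const_mul R⁻¹
    simp only [Function.comp_def] at h6
    refine h6.congr_deriv ?_
    symm
    have hRQ : R * Q ≠ 0 := ne_of_gt (mul_pos hRpos hQpos)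
    rw [← hQdef]
    field_simp
    linear_combination Q^2 * hR2 + (x*s - a^2) * hQ2
  have hint : IntervalIntegrable (fun s => 1 / (Real.sqrt (a^2 - s^2) * (s - x)))
      volume (-a) a := by
    have hc : ContinuousOn (fun s => (s - x)⁻¹) (Set.uIcc (-a) a) := by
      apply ContinuousOn.inv₀ (by fun_prop)
      intro s hs
      rw [Set.uIcc_of_le (by linarith)] at hs
      exact hsx s hs
    have := (sqrt_int_aux a ha).mul_continuousOn hc
    simpa [one_div, mul_inv, mul_comm] using this
  have hcontq : Continuous fun s : ℝ => Real.sqrt (a^2 - s^2) := by fun_prop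
  have hqa : Tendsto (fun s => Real.sqrt (a^2 - s^2)) (𝓝[<] a) (𝓝[>] 0) := by
    rw [tendsto_nhdsWithin_iff]
    constructor
    · have h0 := hcontq.tendsto a
      rw [show a^2 - a^2 = 0 by ring, Real.sqrt_zero] at h0
      exact h0.mono_left nhdsWithin_le_nhds
    · filter_upwards [Ioo_mem_nhdsLT_of_mem
        (⟨neg_lt_self ha, le_refl a⟩ : a ∈ Set.Ioc (-a) a)] with s hs
      exact Real.sqrt_pos.2 (by nlinarith [sq_lt_sq' hs.1 hs.2])
  have hqna : Tendsto (fun s => Real.sqrt (a^2 - s^2)) (𝓝[>] (-a)) (𝓝[>] 0) := by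
    rw [tendsto_nhdsWithin_iff]
    constructor
    · have h0 := hcontq.tendsto (-a)
      rw [show a^2 - (-a)^2 = 0 by ring, Real.sqrt_zero] at h0
      exact h0.mono_left nhdsWithin_le_nhds
    · filter_upwards [Ioo_mem_nhdsGT_of_mem
        (⟨le_refl (-a), neg_lt_self ha⟩ : -a ∈ Set.Ico (-a) a)] with s hs
      exact Real.sqrt_pos.2 (by nlinarith [sq_lt_sq' hs.1 hs.2])
  have hcontn : Continuous fun s : ℝ => a^2 - x*s := by fun_prop
  have hca : a^2 - x*a ≠ 0 := by
    rcases lt_abs.mp hx with h | h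
    · nlinarith
    · nlinarith
  have hcna : a^2 - x*(-a) ≠ 0 := by
    rcases lt_abs.mp hx with h | h
    · nlinarith
    · nlinarith
  have hlima := lim_aux hRpos hca ((hcontn.tendsto a).mono_left nhdsWithin_le_nhds) hqa
  have hlimna := lim_aux hRpos hcna ((hcontn.tendsto (-a)).mono_left nhdsWithin_le_nhds) hqna
  rw [integral_eq_sub_of_hasDerivAt_of_tendsto (by linarith : -a < a) hderiv hint hlimna hlima]
  rcases lt_abs.mp hx with h | h
  · rw [Real.sign_of_neg (by nlinarith : a^2 - x*a < 0),
      Real.sign_of_pos (by nlinarith : 0 < a^2 - x*(-a))]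
    rw [signedRoot, Real.sign_of_pos (by linarith : (0:ℝ) < x), ← hRdef]
    field_simp
    ring
  · rw [Real.sign_of_pos (by nlinarith : 0 < a^2 - x*a),
      Real.sign_of_neg (by nlinarith : a^2 - x*(-a) < 0)]
    rw [signedRoot, Real.sign_of_neg (by linarith : x < (0:ℝ)), ← hRdef]
    field_simp
    ring

theorem arcsine_kernel_integral (a x z : ℝ) (ha : 0 < a)
    (hx : a < |x|) (hz : a < |z|) (hxz : x ≠ z) :
    (1/π) * ∫ s in (-a)..a, 1 / (Real.sqrt (a^2 - s^2) * (s - x) * (s - z))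
      = (1/(x - z)) * (1 / signedRoot a z - 1 / signedRoot a x) := by
  have hxz' : x - z ≠ 0 := sub_ne_zero.2 hxz
  have hsnot : ∀ w : ℝ, a < |w| → ∀ s ∈ Set.uIcc (-a) a, s - w ≠ 0 := by
    intro w hw s hs
    rw [Set.uIcc_of_le (by linarith)] at hs
    rcases lt_abs.mp hw with h | h
    · have := hs.2; intro h0; nlinarith
    · have := hs.1; intro h0; nlinarith
  have hint : ∀ w : ℝ, a < |w| → IntervalIntegrable
      (fun s => 1 / (Real.sqrt (a^2 - s^2) * (s - w))) MeasureTheory.volume (-a) a := by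
    intro w hw
    have hc : ContinuousOn (fun s => (s - w)⁻¹) (Set.uIcc (-a) a) := by
      apply ContinuousOn.inv₀ (by fun_prop)
      exact hsnot w hw
    have := (sqrt_int_aux a ha).mul_continuousOn hc
    simpa [one_div, mul_inv, mul_comm] using this
  have hcongr : ∀ s ∈ Set.uIcc (-a) a,
      1 / (Real.sqrt (a^2 - s^2) * (s - x) * (s - z))
        = (1/(x - z)) * (1 / (Real.sqrt (a^2 - s^2) * (s - x))
            - 1 / (Real.sqrt (a^2 - s^2) * (s - z))) := by
    intro s hs
    have hxne := hsnot x hx s hs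
    have hzne := hsnot z hz s hs
    rcases eq_or_ne (Real.sqrt (a^2 - s^2)) 0 with hq | hq
    · simp [hq]
    · field_simp
      ring
  rw [intervalIntegral.integral_congr hcongr, intervalIntegral.integral_const_mul,
    intervalIntegral.integral_sub (hint x hx) (hint z hz),
    key_single a x ha hx, key_single a z ha hz]
  have hpi : (π : ℝ) ≠ 0 := Real.pi_ne_zero
  have hsx : signedRoot a x ≠ 0 := by
    rw [signedRoot]
    have : (0:ℝ) < Real.sqrt (x^2 - a^2) :=
      Real.sqrt_pos.2 (by nlinarith [sq_abs x, abs_nonneg x])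
    rcases lt_abs.mp hx with h | h
    · rw [Real.sign_of_pos (by linarith : (0:ℝ) < x)]; positivity
    · rw [Real.sign_of_neg (by linarith : x < (0:ℝ))]
      simp only [neg_one_mul, ne_eq, neg_eq_zero]
      exact ne_of_gt this
  have hsz : signedRoot a z ≠ 0 := by
    rw [signedRoot]
    have : (0:ℝ) < Real.sqrt (z^2 - a^2) :=
      Real.sqrt_pos.2 (by nlinarith [sq_abs z, abs_nonneg z])
    rcases lt_abs.mp hz with h | h
    · rw [Real.sign_of_pos (by linarith : (0:ℝ) < z)]; positivity
    · rw [Real.sign_of_neg (by linarith : z < (0:ℝ))]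
      simp only [neg_one_mul, ne_eq, neg_eq_zero]
      exact ne_of_gt this
  field_simp
  ring
end

section
/- Let c ≥ 4 and a = √(2c - 4). The function ρ(x) = (1/(4π))·[arctan((-c(x-4) - 8)/((c-4)·√(2c - 4 - x²))) + arctan((c(x+4) - 8)/((c-4)·√(2c - 4 - x²)))] for |x| < a (and ρ(x) = 0 for |x| ≥ a) satisfies: ρ is even, 0 ≤ ρ(x) ≤ 1/2 for all x, and ρ is continuous on (-a, a). -/
/-!
The substitution `x ↦ -x` swaps the two arctangent terms. Their numerators add up to
`8 (c - 2) > 0` over a common nonnegative denominator, so the sum of the arctangents lies in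
`[0, π)` and `0 ≤ ρ ≤ 1/4`. On `(-a, a)` the denominator is positive, so `ρ` is continuous there.
-/

open Real Set

lemma arctan_add_arctan_nonneg {x y : ℝ} (h : 0 ≤ x + y) : 0 ≤ arctan x + arctan y := by
  have : arctan (-y) ≤ arctan x := arctan_strictMono.monotone (by linarith)
  linarith [arctan_neg y]

lemma arctan_add_arctan_lt_pi (x y : ℝ) : arctan x + arctan y < π := by
  linarith [arctan_lt_pi_div_two x, arctan_lt_pi_div_two y]

lemma arctan_div_add_arctan_div_nonneg {p q d : ℝ} (hpq : 0 ≤ p + q) (hd : 0 ≤ d) :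
    0 ≤ arctan (p / d) + arctan (q / d) :=
  arctan_add_arctan_nonneg (by rw [← add_div]; exact div_nonneg hpq hd)

theorem limit_density_properties (c : ℝ) (hc : 4 < c) (a : ℝ)
    (ha : a = Real.sqrt (2*c - 4)) :
    let ρ : ℝ → ℝ := fun x =>
      if |x| < a then
        (1/(4*π)) * (Real.arctan ((-c*(x-4) - 8)/((c-4) * Real.sqrt (2*c - 4 - x^2)))
          + Real.arctan ((c*(x+4) - 8)/((c-4) * Real.sqrt (2*c - 4 - x^2))))
      else 0
    (∀ x : ℝ, ρ (-x) = ρ x) ∧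
    (∀ x : ℝ, 0 ≤ ρ x ∧ ρ x ≤ 1/2) ∧
    ContinuousOn ρ (Set.Ioo (-a) a) := by
  intro ρ
  subst ha
  have hc4 : 0 < c - 4 := by linarith
  refine ⟨fun x => ?_, fun x => ?_, ?_⟩
  · simp only [ρ, abs_neg, neg_sq]
    ring_nf
  · simp only [ρ]
    split_ifs
    · have hsum := arctan_div_add_arctan_div_nonneg (p := -c*(x-4) - 8) (q := c*(x+4) - 8)
        (by linarith) (mul_nonneg hc4.le (sqrt_nonneg (2*c - 4 - x^2)))
      have hlt := arctan_add_arctan_lt_pi ((-c*(x-4) - 8)/((c-4) * √(2*c - 4 - x^2)))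
        ((c*(x+4) - 8)/((c-4) * √(2*c - 4 - x^2)))
      constructor
      · exact mul_nonneg (by positivity) hsum
      · rw [div_mul_eq_mul_div, one_mul, div_le_iff₀ (by positivity)]
        linarith
    · norm_num
  · have hden : ∀ x ∈ Ioo (-√(2*c - 4)) √(2*c - 4), (c - 4) * √(2*c - 4 - x^2) ≠ 0 :=
      fun x hx => (mul_pos hc4 (sqrt_pos.2 (sub_pos.2 (sq_lt.2 hx)))).ne'
    refine ContinuousOn.congr ?_ (fun x hx => if_pos (abs_lt.2 hx))
    fun_prop (disch := exact hden)
end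

section
/- Let c > 4 and a = √(2c - 4). Then ∫_{-a}^{a} ρ(x) dx = 1, where ρ(x) = (1/(4π))·[arctan((-c(x-4) - 8)/((c-4)·√(2c - 4 - x²))) + arctan((c(x+4) - 8)/((c-4)·√(2c - 4 - x²)))]. -/
/-!
With `a ^ 2 = 2c - 4` and `w = √(a² - x²)`, each arctan in the density is the arcsin of a
rational function of `x`, because `((c-4) w)² + (2a² ∓ c x)² = (a (c ∓ 2x))²`. In this form the
sum `H` of the two arcsines is continuous on `[-a, a]` and vanishes at `±a`, and
`x H(x) - (c-4) arcsin (x/a) + c arcsin ((c-4) x / (a √(c² - 4x²)))` is a primitive of it: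
the derivatives of the last two terms cancel `x H'(x) = -4(c-4) x² / (w (c² - 4x²))`.
The primitive takes the values `±2π` at `±a`, so the integral of the density is `4π`.
-/

open Real Set intervalIntegral

theorem arctan_div_eq_arcsin_div {n d e : ℝ} (hd : 0 < d) (he : 0 < e)
    (h : d ^ 2 + n ^ 2 = e ^ 2) : arctan (n / d) = arcsin (n / e) := by
  rw [arctan_eq_arcsin]
  congr 1
  rw [show 1 + (n / d) ^ 2 = (e / d) ^ 2 by field_simp; linarith, sqrt_sq (by positivity)]
  field_simp

theorem HasDerivAt.arcsin_div {n e : ℝ → ℝ} {n' e' p x : ℝ} (hn : HasDerivAt n n' x)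
    (he : HasDerivAt e e' x) (hex : 0 < e x) (hp : 0 < p) (h : e x ^ 2 = n x ^ 2 + p ^ 2) :
    HasDerivAt (fun y => arcsin (n y / e y)) ((n' * e x - n x * e') / (e x * p)) x := by
  have hlt : |n x / e x| < 1 := by
    rw [← sq_lt_one_iff_abs_lt_one, div_pow, div_lt_one (by positivity)]
    nlinarith
  have hsqrt : √(1 - (n x / e x) ^ 2) = p / e x := by
    rw [show 1 - (n x / e x) ^ 2 = (p / e x) ^ 2 by field_simp; linarith,
      sqrt_sq (by positivity)]
  obtain ⟨hlo, hhi⟩ := abs_lt.mp hlt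
  refine ((hasDerivAt_arcsin hlo.ne' hhi.ne).comp x (hn.div he hex.ne')).congr_deriv ?_
  rw [hsqrt]
  field_simp

theorem two_mul_lt_of_sq_eq {c a : ℝ} (hc : 4 < c) (ha : 0 < a) (ha2 : a ^ 2 = 2 * c - 4) :
    2 * a < c := by
  nlinarith

noncomputable def densityArcsin (c a x : ℝ) : ℝ :=
  arcsin ((2 * a ^ 2 - c * x) / (a * (c - 2 * x)))
    + arcsin ((c * x + 2 * a ^ 2) / (a * (c + 2 * x)))

theorem densityArcsin_self {c a : ℝ} (ha : 0 < a) (hca : 2 * a < c) :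
    densityArcsin c a a = 0 := by
  rw [densityArcsin,
    show (2 * a ^ 2 - c * a) / (a * (c - 2 * a)) = -1 by
      rw [div_eq_iff (mul_pos ha (by linarith)).ne']; ring,
    show (c * a + 2 * a ^ 2) / (a * (c + 2 * a)) = 1 by
      rw [div_eq_iff (mul_pos ha (by linarith)).ne']; ring,
    arcsin_neg_one, arcsin_one]
  ring

theorem densityArcsin_neg_self {c a : ℝ} (ha : 0 < a) (hca : 2 * a < c) :
    densityArcsin c a (-a) = 0 := by
  rw [densityArcsin,
    show (2 * a ^ 2 - c * -a) / (a * (c - 2 * -a)) = 1 by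
      rw [div_eq_iff (mul_pos ha (by linarith)).ne']; ring,
    show (c * -a + 2 * a ^ 2) / (a * (c + 2 * -a)) = -1 by
      rw [div_eq_iff (mul_pos ha (by linarith)).ne']; ring,
    arcsin_neg_one, arcsin_one]
  ring

theorem arctan_add_arctan_eq_densityArcsin {c a x : ℝ} (hc : 4 < c) (ha : 0 < a)
    (ha2 : a ^ 2 = 2 * c - 4) (hx : x ∈ Icc (-a) a) :
    arctan ((-c * (x - 4) - 8) / ((c - 4) * √(2 * c - 4 - x ^ 2)))
      + arctan ((c * (x + 4) - 8) / ((c - 4) * √(2 * c - 4 - x ^ 2))) = densityArcsin c a x := by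
  have hca := two_mul_lt_of_sq_eq hc ha ha2
  obtain ⟨hlo, hhi⟩ := hx
  rcases hhi.lt_or_eq with hhi | rfl
  · rcases hlo.lt_or_eq with hlo | rfl
    · have hw : 0 < a ^ 2 - x ^ 2 := by nlinarith
      have hw2 := sq_sqrt hw.le
      rw [densityArcsin, show -c * (x - 4) - 8 = 2 * a ^ 2 - c * x by linear_combination -2 * ha2,
        show c * (x + 4) - 8 = c * x + 2 * a ^ 2 by linear_combination -2 * ha2,
        show 2 * c - 4 - x ^ 2 = a ^ 2 - x ^ 2 by linear_combination -ha2]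
      have hd : 0 < (c - 4) * √(a ^ 2 - x ^ 2) := mul_pos (by linarith) (sqrt_pos.2 hw)
      congr 1
      · refine arctan_div_eq_arcsin_div hd (mul_pos ha (by linarith)) ?_
        linear_combination (c - 4) ^ 2 * hw2 + 4 * (a ^ 2 - x ^ 2) * ha2
      · refine arctan_div_eq_arcsin_div hd (mul_pos ha (by linarith)) ?_
        linear_combination (c - 4) ^ 2 * hw2 + 4 * (a ^ 2 - x ^ 2) * ha2
    · rw [densityArcsin_neg_self ha hca,
        show 2 * c - 4 - (-a) ^ 2 = 0 by linear_combination -ha2]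
      simp
  · rw [densityArcsin_self ha hca,
      show 2 * c - 4 - x ^ 2 = 0 by linear_combination -ha2]
    simp

theorem continuousOn_densityArcsin {c a : ℝ} (ha : 0 < a) (hca : 2 * a < c) :
    ContinuousOn (densityArcsin c a) (Icc (-a) a) := by
  refine
    (continuous_arcsin.comp_continuousOn (ContinuousOn.div (by fun_prop) (by fun_prop) ?_)).add
      (continuous_arcsin.comp_continuousOn (ContinuousOn.div (by fun_prop) (by fun_prop) ?_))
  all_goals
    intro x hx
    exact (mul_pos ha (by linarith [hx.1, hx.2])).ne'

theorem hasDerivAt_densityArcsin {c a x : ℝ} (hc : 4 < c) (ha : 0 < a)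
    (ha2 : a ^ 2 = 2 * c - 4) (hx : x ∈ Ioo (-a) a) :
    HasDerivAt (densityArcsin c a)
      (-4 * (c - 4) * x / (√(a ^ 2 - x ^ 2) * ((c - 2 * x) * (c + 2 * x)))) x := by
  have hca := two_mul_lt_of_sq_eq hc ha ha2
  obtain ⟨hlo, hhi⟩ := hx
  have hw : 0 < a ^ 2 - x ^ 2 := by nlinarith
  have hw2 := sq_sqrt hw.le
  have hp : 0 < (c - 4) * √(a ^ 2 - x ^ 2) := mul_pos (by linarith) (sqrt_pos.2 hw)
  have hminus : 0 < c - 2 * x := by linarith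
  have hplus : 0 < c + 2 * x := by linarith
  have h1 := HasDerivAt.arcsin_div (((hasDerivAt_id x).const_mul c).const_sub (2 * a ^ 2))
    ((((hasDerivAt_id x).const_mul 2).const_sub c).const_mul a) (mul_pos ha hminus) hp
    (by simp only [id]; linear_combination -(c - 4) ^ 2 * hw2 - 4 * (a ^ 2 - x ^ 2) * ha2)
  have h2 := HasDerivAt.arcsin_div (((hasDerivAt_id x).const_mul c).add_const (2 * a ^ 2))
    ((((hasDerivAt_id x).const_mul 2).const_add c).const_mul a) (mul_pos ha hplus) hp
    (by simp only [id]; linear_combination -(c - 4) ^ 2 * hw2 - 4 * (a ^ 2 - x ^ 2) * ha2)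
  refine (h1.add h2).congr_deriv ?_
  have hc4 : c - 4 ≠ 0 := by linarith
  simp only [id]
  field_simp
  linear_combination 16 * x * ha2

noncomputable def densityPrimitive (c a x : ℝ) : ℝ :=
  x * densityArcsin c a x - (c - 4) * arcsin (x / a)
    + c * arcsin ((c - 4) * x / (a * √(c ^ 2 - 4 * x ^ 2)))

theorem hasDerivAt_densityPrimitive {c a x : ℝ} (hc : 4 < c) (ha : 0 < a)
    (ha2 : a ^ 2 = 2 * c - 4) (hx : x ∈ Ioo (-a) a) :
    HasDerivAt (densityPrimitive c a) (densityArcsin c a x) x := by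
  have hca := two_mul_lt_of_sq_eq hc ha ha2
  obtain ⟨hlo, hhi⟩ := hx
  have hw : 0 < a ^ 2 - x ^ 2 := by nlinarith
  have hw2 := sq_sqrt hw.le
  have hw0 := sqrt_pos.2 hw
  have hr : 0 < c ^ 2 - 4 * x ^ 2 := by nlinarith
  have hr2 := sq_sqrt hr.le
  have hr0 := sqrt_pos.2 hr
  have hH := (hasDerivAt_id x).mul (hasDerivAt_densityArcsin hc ha ha2 ⟨hlo, hhi⟩)
  have hlin := HasDerivAt.arcsin_div (hasDerivAt_id x) (hasDerivAt_const x a) ha hw0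
    (by simp only [id]; linear_combination -hw2)
  have hcorr := HasDerivAt.arcsin_div ((hasDerivAt_id x).const_mul (c - 4))
    ((((hasDerivAt_pow 2 x).const_mul 4).const_sub (c ^ 2)).sqrt hr.ne' |>.const_mul a)
    (mul_pos ha hr0) (mul_pos (by linarith : (0 : ℝ) < c) hw0)
    (by simp only [id]; linear_combination a ^ 2 * hr2 - c ^ 2 * hw2 - 4 * x ^ 2 * ha2)
  refine ((hH.sub (hlin.const_mul (c - 4))).add (hcorr.const_mul c)).congr_deriv ?_
  set w := √(a ^ 2 - x ^ 2)
  set r := √(c ^ 2 - 4 * x ^ 2)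
  rw [show (c - 2 * x) * (c + 2 * x) = r ^ 2 by rw [hr2]; ring]
  simp only [id]
  field_simp
  ring

theorem continuousOn_densityPrimitive {c a : ℝ} (ha : 0 < a) (hca : 2 * a < c) :
    ContinuousOn (densityPrimitive c a) (Icc (-a) a) := by
  refine ((continuousOn_id.mul (continuousOn_densityArcsin ha hca)).sub (by fun_prop)).add
    (continuousOn_const.mul (continuous_arcsin.comp_continuousOn
      (ContinuousOn.div (by fun_prop) (by fun_prop) fun x hx => ?_)))
  have hr : 0 < c ^ 2 - 4 * x ^ 2 := by nlinarith [hx.1, hx.2]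
  exact (mul_pos ha (sqrt_pos.2 hr)).ne'

theorem sqrt_sq_sub_four_mul_sq {c a : ℝ} (hc : 4 < c) (ha2 : a ^ 2 = 2 * c - 4) :
    √(c ^ 2 - 4 * a ^ 2) = c - 4 := by
  rw [show c ^ 2 - 4 * a ^ 2 = (c - 4) ^ 2 by linear_combination -4 * ha2,
    sqrt_sq (by linarith)]

theorem densityPrimitive_self {c a : ℝ} (hc : 4 < c) (ha : 0 < a) (ha2 : a ^ 2 = 2 * c - 4) :
    densityPrimitive c a a = 2 * π := by
  have hc4 : c - 4 ≠ 0 := by linarith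
  rw [densityPrimitive, densityArcsin_self ha (two_mul_lt_of_sq_eq hc ha ha2),
    sqrt_sq_sub_four_mul_sq hc ha2, div_self ha.ne',
    show (c - 4) * a / (a * (c - 4)) = 1 by field_simp, arcsin_one]
  ring

theorem densityPrimitive_neg_self {c a : ℝ} (hc : 4 < c) (ha : 0 < a)
    (ha2 : a ^ 2 = 2 * c - 4) : densityPrimitive c a (-a) = -(2 * π) := by
  have hc4 : c - 4 ≠ 0 := by linarith
  rw [densityPrimitive, densityArcsin_neg_self ha (two_mul_lt_of_sq_eq hc ha ha2), neg_sq,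
    sqrt_sq_sub_four_mul_sq hc ha2, neg_div, div_self ha.ne',
    show (c - 4) * -a / (a * (c - 4)) = -1 by field_simp, arcsin_neg_one]
  ring

theorem limit_density_normalized (c : ℝ) (hc : 4 < c) (a : ℝ)
    (ha : a = Real.sqrt (2*c - 4)) :
    ∫ x in (-a)..a,
        (1/(4*π)) * (Real.arctan ((-c*(x-4) - 8)/((c-4) * Real.sqrt (2*c - 4 - x^2)))
          + Real.arctan ((c*(x+4) - 8)/((c-4) * Real.sqrt (2*c - 4 - x^2))))
      = 1 := by
  have ha0 : 0 < a := ha ▸ sqrt_pos.2 (by linarith)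
  have ha2 : a ^ 2 = 2 * c - 4 := ha ▸ sq_sqrt (by linarith)
  have hca := two_mul_lt_of_sq_eq hc ha0 ha2
  have hle : -a ≤ a := by linarith
  rw [integral_const_mul,
    integral_congr fun x hx => arctan_add_arctan_eq_densityArcsin hc ha0 ha2 (uIcc_of_le hle ▸ hx),
    integral_eq_sub_of_hasDerivAt_of_le hle (continuousOn_densityPrimitive ha0 hca)
      (fun x hx => hasDerivAt_densityPrimitive hc ha0 ha2 hx)
      ((continuousOn_densityArcsin ha0 hca).intervalIntegrable_of_Icc hle),
    densityPrimitive_self hc ha0 ha2, densityPrimitive_neg_self hc ha0 ha2]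
  field_simp
  ring
end

section
/- Let f : ℝ → ℝ be Lipschitz with compact support contained in [-M, M], and suppose |f(x)| ≤ δ for all x and f is 1-Lipschitz. Then the double integral ∫∫_{ℝ²} ((f(x) - f(y))/(x - y))² dx dy is at most C·(δ + δ·ln(1/δ)) for some constant C depending only on M, for all 0 < δ < 1/2. -/
/-!
The difference quotient `(f x - f y) / (x - y)` is at most `1` in absolute value (Lipschitz) and
at most `2δ / |x - y|` (size), so its square is dominated by the Cauchy kernel
`2a² / (a² + t²)` with `a = 2δ`, `t = x - y`, whose integral over the line is `2πa`. The integrand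
vanishes unless `x` or `y` lies in `[-M, M]`; integrating the kernel over these two strips gives
the bound `2 · 2M · 4πδ = 16πMδ`.
-/

open MeasureTheory Set Real
open scoped ENNReal

theorem sq_div_le_two_sq_div_sq_add_sq {u t a : ℝ} (hut : |u| ≤ |t|) (hua : |u| ≤ a) :
    (u / t) ^ 2 ≤ 2 * a ^ 2 / (a ^ 2 + t ^ 2) := by
  rcases eq_or_ne t 0 with rfl | ht
  · rw [div_zero, zero_pow two_ne_zero]; positivity
  have hut' : a ^ 2 * u ^ 2 ≤ a ^ 2 * t ^ 2 :=
    mul_le_mul_of_nonneg_left (sq_le_sq.mpr hut) (sq_nonneg a)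
  have hua' : t ^ 2 * u ^ 2 ≤ t ^ 2 * a ^ 2 :=
    mul_le_mul_of_nonneg_left (sq_le_sq' (abs_le.mp hua).1 (abs_le.mp hua).2) (sq_nonneg t)
  rw [div_pow, div_le_div_iff₀ (by positivity) (by positivity)]
  linarith

section CauchyKernel

theorem two_sq_div_sq_add_sq_eq {a : ℝ} (ha : a ≠ 0) :
    (fun t : ℝ ↦ 2 * a ^ 2 / (a ^ 2 + t ^ 2)) = fun t ↦ 2 * (1 + (t / a) ^ 2)⁻¹ := by
  ext t
  field_simp

theorem integrable_two_sq_div_sq_add_sq (a : ℝ) :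
    Integrable fun t : ℝ ↦ 2 * a ^ 2 / (a ^ 2 + t ^ 2) := by
  rcases eq_or_ne a 0 with rfl | ha
  · simp
  rw [two_sq_div_sq_add_sq_eq ha]
  exact (integrable_inv_one_add_sq.comp_div ha).const_mul 2

theorem integral_two_sq_div_sq_add_sq (a : ℝ) :
    ∫ t : ℝ, 2 * a ^ 2 / (a ^ 2 + t ^ 2) = 2 * π * |a| := by
  rcases eq_or_ne a 0 with rfl | ha
  · simp
  rw [two_sq_div_sq_add_sq_eq ha, integral_const_mul,
    Measure.integral_comp_div (fun t ↦ (1 + t ^ 2)⁻¹), integral_univ_inv_one_add_sq, smul_eq_mul]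
  ring

theorem lintegral_two_sq_div_sq_add_sq (a : ℝ) :
    ∫⁻ t : ℝ, ENNReal.ofReal (2 * a ^ 2 / (a ^ 2 + t ^ 2)) = ENNReal.ofReal (2 * π * |a|) := by
  rw [← integral_two_sq_div_sq_add_sq,
    ofReal_integral_eq_lintegral_ofReal (integrable_two_sq_div_sq_add_sq a)
      (.of_forall fun t ↦ by positivity)]

end CauchyKernel

section Strips

variable {G : Type*} [MeasurableSpace G] [AddGroup G] [MeasurableAdd₂ G] [MeasurableNeg G]
  {φ : G → ℝ≥0∞}

theorem setLIntegral_prod_univ_sub (μ : Measure G) [SFinite μ] [μ.IsAddLeftInvariant]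
    [μ.IsNegInvariant] (hφ : Measurable φ) (s : Set G) :
    ∫⁻ p in s ×ˢ univ, φ (p.1 - p.2) ∂(μ.prod μ) = μ s * ∫⁻ t, φ t ∂μ := by
  rw [← Measure.prod_restrict, Measure.restrict_univ,
    lintegral_prod (fun p : G × G ↦ φ (p.1 - p.2)) (hφ.comp measurable_sub).aemeasurable]
  simp_rw [lintegral_sub_left_eq_self]
  rw [setLIntegral_const, mul_comm]

theorem setLIntegral_univ_prod_sub (μ : Measure G) [SFinite μ] [μ.IsAddRightInvariant]
    (hφ : Measurable φ) (s : Set G) :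
    ∫⁻ p in univ ×ˢ s, φ (p.1 - p.2) ∂(μ.prod μ) = μ s * ∫⁻ t, φ t ∂μ := by
  rw [← Measure.prod_restrict, Measure.restrict_univ,
    lintegral_prod_symm (fun p : G × G ↦ φ (p.1 - p.2)) (hφ.comp measurable_sub).aemeasurable]
  simp_rw [lintegral_sub_right_eq_self]
  rw [setLIntegral_const, mul_comm]

end Strips

section DiffQuot

variable {f : ℝ → ℝ} {s : Set ℝ} {δ : ℝ}

theorem support_sq_diffQuot_subset (hsupp : Function.support f ⊆ s) :
    Function.support (fun p : ℝ × ℝ ↦ ((f p.1 - f p.2) / (p.1 - p.2)) ^ 2) ⊆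
      s ×ˢ univ ∪ univ ×ˢ s := by
  rintro ⟨x, y⟩ hxy
  contrapose! hxy
  simp only [mem_union, mem_prod, mem_univ, and_true, true_and, not_or] at hxy
  simp [Function.notMem_support.mp fun h ↦ hxy.1 (hsupp h),
    Function.notMem_support.mp fun h ↦ hxy.2 (hsupp h)]

theorem LipschitzWith.sq_diffQuot_le (hf : LipschitzWith 1 f) (hbd : ∀ x, |f x| ≤ δ) (x y : ℝ) :
    ((f x - f y) / (x - y)) ^ 2 ≤ 2 * (2 * δ) ^ 2 / ((2 * δ) ^ 2 + (x - y) ^ 2) := by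
  refine sq_div_le_two_sq_div_sq_add_sq ?_ ?_
  · simpa [← Real.dist_eq] using hf.dist_le_mul x y
  · exact (abs_sub _ _).trans (by linarith [hbd x, hbd y])

theorem LipschitzWith.lintegral_sq_diffQuot_le (hf : LipschitzWith 1 f)
    (hsupp : Function.support f ⊆ s) (hbd : ∀ x, |f x| ≤ δ) :
    ∫⁻ p : ℝ × ℝ, ENNReal.ofReal (((f p.1 - f p.2) / (p.1 - p.2)) ^ 2) ≤
      2 * volume s * ENNReal.ofReal (4 * π * δ) := by
  set K : ℝ → ℝ≥0∞ := fun t ↦ ENNReal.ofReal (2 * (2 * δ) ^ 2 / ((2 * δ) ^ 2 + t ^ 2))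
  have hK : Measurable K := by fun_prop
  have hδ : 0 ≤ δ := (abs_nonneg _).trans (hbd 0)
  calc ∫⁻ p : ℝ × ℝ, ENNReal.ofReal (((f p.1 - f p.2) / (p.1 - p.2)) ^ 2)
      = ∫⁻ p in s ×ˢ univ ∪ univ ×ˢ s,
          ENNReal.ofReal (((f p.1 - f p.2) / (p.1 - p.2)) ^ 2) :=
        (setLIntegral_eq_of_support_subset
          ((Function.support_comp_subset ENNReal.ofReal_zero _).trans
            (support_sq_diffQuot_subset hsupp))).symm
    _ ≤ ∫⁻ p in s ×ˢ univ ∪ univ ×ˢ s, K (p.1 - p.2) :=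
        lintegral_mono fun p ↦ ENNReal.ofReal_le_ofReal (hf.sq_diffQuot_le hbd p.1 p.2)
    _ ≤ (∫⁻ p in s ×ˢ univ, K (p.1 - p.2)) + ∫⁻ p in univ ×ˢ s, K (p.1 - p.2) :=
        lintegral_union_le _ _ _
    _ = 2 * volume s * ENNReal.ofReal (4 * π * δ) := by
        rw [Measure.volume_eq_prod, setLIntegral_prod_univ_sub _ hK,
          setLIntegral_univ_prod_sub _ hK, lintegral_two_sq_div_sq_add_sq,
          abs_of_nonneg (by positivity)]
        ring_nf

theorem LipschitzWith.integral_sq_diffQuot_le (hf : LipschitzWith 1 f)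
    (hsupp : Function.support f ⊆ s) (hs : volume s ≠ ∞) (hbd : ∀ x, |f x| ≤ δ) :
    ∫ p : ℝ × ℝ, ((f p.1 - f p.2) / (p.1 - p.2)) ^ 2 ≤ 8 * π * volume.real s * δ := by
  have hδ : 0 ≤ δ := (abs_nonneg _).trans (hbd 0)
  have hfm : Measurable f := hf.continuous.measurable
  rw [integral_eq_lintegral_of_nonneg_ae (.of_forall fun p ↦ sq_nonneg _)
    (Measurable.aestronglyMeasurable (by fun_prop))]
  refine ENNReal.toReal_le_of_le_ofReal (by positivity)
    ((hf.lintegral_sq_diffQuot_le hsupp hbd).trans_eq ?_)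
  rw [← ofReal_measureReal hs, ← ENNReal.ofReal_ofNat 2, ← ENNReal.ofReal_mul zero_le_two,
    ← ENNReal.ofReal_mul (by positivity)]
  ring_nf

end DiffQuot

theorem sobolev_half_seminorm_bound (M : ℝ) (hM : 0 < M) :
    ∃ C > 0, ∀ (f : ℝ → ℝ) (δ : ℝ),
      LipschitzWith 1 f →
      Function.support f ⊆ Set.Icc (-M) M →
      0 < δ → δ < 1/2 →
      (∀ x : ℝ, |f x| ≤ δ) →
      (∫ p : ℝ × ℝ, ((f p.1 - f p.2)/(p.1 - p.2))^2)
        ≤ C * (δ + δ * Real.log (1/δ)) := by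
  refine ⟨16 * π * M, by positivity, fun f δ hf hsupp hδ hδ_half hbd ↦ ?_⟩
  have hlog : 0 ≤ Real.log (1 / δ) := Real.log_nonneg (one_le_one_div hδ (by linarith))
  calc (∫ p : ℝ × ℝ, ((f p.1 - f p.2) / (p.1 - p.2)) ^ 2)
      ≤ 8 * π * volume.real (Icc (-M) M) * δ :=
        hf.integral_sq_diffQuot_le hsupp measure_Icc_lt_top.ne hbd
    _ = 16 * π * M * δ := by rw [Real.volume_real_Icc_of_le (by linarith)]; ring
    _ ≤ 16 * π * M * (δ + δ * Real.log (1 / δ)) := by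
        gcongr
        exact le_add_of_nonneg_right (by positivity)
end
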